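/- arXiv:2107.09426 — 4 statements merged into one kernel-verified Lean document; each statement's English description precedes it below -/
import Mathlib

section
/- First order expansion via Amstutz' adjoint: under the setting of the abstract Lagrangian L(ε,u,v) = J_ε(u)+a_ε(u,v)−f_ε(v), with j(ε)=J_ε(u_ε) and p_ε the adjoint solving a_ε(φ,p_ε)=−∂J_ε(u₀)(φ) for all φ∈V, suppose ℓ₁ : ℝ⁺ → ℝ⁺ satisfies ℓ₁(ε) → 0 as ε ↘ 0 and the limits R⁽¹⁾ := lim_{ε↘0} [L(ε,u_ε,p_ε) − L(ε,u₀,p_ε)]/ℓ₁(ε) and ∂_ℓ⁽¹⁾L := lim_{ε↘0} [L(ε,u₀,p_ε) − L(0,u₀,p_ε)]/ℓ₁(ε) exist. Then j(ε) = j(0) + ℓ₁(ε)(R⁽¹⁾ + ∂_ℓ⁽¹⁾L) + o(ℓ₁(ε)). -/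
open Filter Asymptotics Topology

/-- First order topological expansion via Amstutz' adjoint method:
if the limits `R⁽¹⁾` and `∂_ℓ⁽¹⁾L` exist, then
`j(ε) = j(0) + ℓ₁(ε)(R⁽¹⁾ + ∂_ℓ⁽¹⁾L) + o(ℓ₁(ε))` as `ε ↘ 0`. -/
theorem stmt_14
    {V : Type*} [NormedAddCommGroup V] [InnerProductSpace ℝ V] [CompleteSpace V]
    (W : Submodule ℝ V)
    (a : ℝ → V →ₗ[ℝ] V →ₗ[ℝ] ℝ) (f : ℝ → V →ₗ[ℝ] ℝ)
    (J : ℝ → V → ℝ) (J' : ℝ → V →L[ℝ] ℝ)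
    (u p : ℝ → V)
    (hstate : ∀ ε : ℝ, 0 ≤ ε → ∀ φ ∈ W, a ε (u ε) φ = f ε φ)
    (hdiffW : ∀ ε : ℝ, 0 ≤ ε → u ε - u 0 ∈ W)
    (hJ : ∀ ε : ℝ, 0 ≤ ε → HasFDerivAt (J ε) (J' ε) (u 0))
    (hadjW : ∀ ε : ℝ, 0 ≤ ε → p ε ∈ W)
    (hadj : ∀ ε : ℝ, 0 ≤ ε → ∀ φ : V, a ε φ (p ε) = -(J' ε φ))
    (L : ℝ → V → V → ℝ)
    (hL : ∀ ε u' v', L ε u' v' = J ε u' + a ε u' v' - f ε v')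
    (j : ℝ → ℝ) (hj : ∀ ε : ℝ, j ε = J ε (u ε))
    (ℓ₁ : ℝ → ℝ) (hℓ₁pos : ∀ ε : ℝ, 0 < ε → 0 < ℓ₁ ε)
    (hℓ₁ : Tendsto ℓ₁ (𝓝[>] (0 : ℝ)) (𝓝 0))
    (R₁ P₁ : ℝ)
    (hR₁ : Tendsto (fun ε => (L ε (u ε) (p ε) - L ε (u 0) (p ε)) / ℓ₁ ε)
      (𝓝[>] (0 : ℝ)) (𝓝 R₁))
    (hP₁ : Tendsto (fun ε => (L ε (u 0) (p ε) - L 0 (u 0) (p ε)) / ℓ₁ ε)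
      (𝓝[>] (0 : ℝ)) (𝓝 P₁))
    :
    (fun ε => j ε - j 0 - ℓ₁ ε * (R₁ + P₁)) =o[𝓝[>] (0 : ℝ)] ℓ₁ := by
  have key : ∀ ε : ℝ, 0 < ε → j ε - j 0 =
      (L ε (u ε) (p ε) - L ε (u 0) (p ε)) + (L ε (u 0) (p ε) - L 0 (u 0) (p ε)) := by
    intro ε hε
    have h1 : L ε (u ε) (p ε) = j ε := by
      rw [hL, hj, hstate ε hε.le (p ε) (hadjW ε hε.le)]; ring
    have h2 : L 0 (u 0) (p ε) = j 0 := by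
      rw [hL, hj, hstate 0 le_rfl (p ε) (hadjW ε hε.le)]; ring
    rw [h1, h2]; ring
  have hne : ∀ᶠ ε in 𝓝[>] (0:ℝ), ℓ₁ ε ≠ 0 := by
    filter_upwards [self_mem_nhdsWithin] with ε hε
    exact (hℓ₁pos ε hε).ne'
  rw [isLittleO_iff_tendsto' (by filter_upwards [hne] with ε h h'; exact absurd h' h)]
  have hsum := hR₁.add hP₁
  have : Tendsto (fun ε => (j ε - j 0) / ℓ₁ ε) (𝓝[>] (0:ℝ)) (𝓝 (R₁ + P₁)) := by
    refine hsum.congr' ?_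
    filter_upwards [self_mem_nhdsWithin] with ε hε
    rw [key ε hε, add_div]
  have := this.sub (tendsto_const_nhds (x := R₁ + P₁))
  rw [sub_self] at this
  refine this.congr' ?_
  filter_upwards [hne] with ε h
  field_simp
end

section
/- Second order expansion via Amstutz' adjoint: in the setting above, assume additionally ℓ₂ : ℝ⁺ → ℝ⁺ with ℓ₂(ε)/ℓ₁(ε) → 0 as ε ↘ 0, and that the limits R⁽²⁾ := lim_{ε↘0} [L(ε,u_ε,p_ε) − L(ε,u₀,p_ε) − ℓ₁(ε)R⁽¹⁾]/ℓ₂(ε) and ∂_ℓ⁽²⁾L := lim_{ε↘0} [L(ε,u₀,p_ε) − L(0,u₀,p_ε) − ℓ₁(ε)∂_ℓ⁽¹⁾L]/ℓ₂(ε) exist. Then j(ε) = j(0) + ℓ₁(ε)(R⁽¹⁾ + ∂_ℓ⁽¹⁾L) + ℓ₂(ε)(R⁽²⁾ + ∂_ℓ⁽²⁾L) + o(ℓ₂(ε)). -/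
open Filter Asymptotics Topology

/-- Second order topological expansion via Amstutz' adjoint method:
with `ℓ₂(ε)/ℓ₁(ε) → 0` and second-order limits `R⁽²⁾, ∂_ℓ⁽²⁾L`,
`j(ε) = j(0) + ℓ₁(ε)(R⁽¹⁾+∂_ℓ⁽¹⁾L) + ℓ₂(ε)(R⁽²⁾+∂_ℓ⁽²⁾L) + o(ℓ₂(ε))`. -/
theorem stmt_15
    {V : Type*} [NormedAddCommGroup V] [InnerProductSpace ℝ V] [CompleteSpace V]
    (W : Submodule ℝ V)
    (a : ℝ → V →ₗ[ℝ] V →ₗ[ℝ] ℝ) (f : ℝ → V →ₗ[ℝ] ℝ)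
    (J : ℝ → V → ℝ) (J' : ℝ → V →L[ℝ] ℝ)
    (u p : ℝ → V)
    (hstate : ∀ ε : ℝ, 0 ≤ ε → ∀ φ ∈ W, a ε (u ε) φ = f ε φ)
    (hdiffW : ∀ ε : ℝ, 0 ≤ ε → u ε - u 0 ∈ W)
    (hJ : ∀ ε : ℝ, 0 ≤ ε → HasFDerivAt (J ε) (J' ε) (u 0))
    (hadjW : ∀ ε : ℝ, 0 ≤ ε → p ε ∈ W)
    (hadj : ∀ ε : ℝ, 0 ≤ ε → ∀ φ : V, a ε φ (p ε) = -(J' ε φ))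
    (L : ℝ → V → V → ℝ)
    (hL : ∀ ε u' v', L ε u' v' = J ε u' + a ε u' v' - f ε v')
    (j : ℝ → ℝ) (hj : ∀ ε : ℝ, j ε = J ε (u ε))
    (ℓ₁ : ℝ → ℝ) (hℓ₁pos : ∀ ε : ℝ, 0 < ε → 0 < ℓ₁ ε)
    (hℓ₁ : Tendsto ℓ₁ (𝓝[>] (0 : ℝ)) (𝓝 0))
    (R₁ P₁ : ℝ)
    (hR₁ : Tendsto (fun ε => (L ε (u ε) (p ε) - L ε (u 0) (p ε)) / ℓ₁ ε)
      (𝓝[>] (0 : ℝ)) (𝓝 R₁))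
    (hP₁ : Tendsto (fun ε => (L ε (u 0) (p ε) - L 0 (u 0) (p ε)) / ℓ₁ ε)
      (𝓝[>] (0 : ℝ)) (𝓝 P₁))
    (ℓ₂ : ℝ → ℝ) (hℓ₂pos : ∀ ε : ℝ, 0 < ε → 0 < ℓ₂ ε)
    (hℓ₂ : Tendsto (fun ε => ℓ₂ ε / ℓ₁ ε) (𝓝[>] (0 : ℝ)) (𝓝 0))
    (R₂ P₂ : ℝ)
    (hR₂ : Tendsto
      (fun ε => (L ε (u ε) (p ε) - L ε (u 0) (p ε) - ℓ₁ ε * R₁) / ℓ₂ ε)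
      (𝓝[>] (0 : ℝ)) (𝓝 R₂))
    (hP₂ : Tendsto
      (fun ε => (L ε (u 0) (p ε) - L 0 (u 0) (p ε) - ℓ₁ ε * P₁) / ℓ₂ ε)
      (𝓝[>] (0 : ℝ)) (𝓝 P₂)) :
    (fun ε => j ε - j 0 - ℓ₁ ε * (R₁ + P₁) - ℓ₂ ε * (R₂ + P₂))
      =o[𝓝[>] (0 : ℝ)] ℓ₂ := by
  have hne : ∀ᶠ ε in 𝓝[>] (0 : ℝ), ℓ₂ ε ≠ 0 := by
    filter_upwards [self_mem_nhdsWithin] with ε hε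
    exact (hℓ₂pos ε hε).ne'
  have hkey : ∀ᶠ ε in 𝓝[>] (0 : ℝ),
      j ε - j 0 = (L ε (u ε) (p ε) - L ε (u 0) (p ε))
        + (L ε (u 0) (p ε) - L 0 (u 0) (p ε)) := by
    filter_upwards [self_mem_nhdsWithin] with ε hε
    have hε' : (0:ℝ) ≤ ε := le_of_lt hε
    have h1 : L ε (u ε) (p ε) = J ε (u ε) := by
      rw [hL, hstate ε hε' (p ε) (hadjW ε hε')]; ring
    have h2 : L 0 (u 0) (p ε) = J 0 (u 0) := by
      rw [hL, hstate 0 le_rfl (p ε) (hadjW ε hε')]; ring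
    rw [hj, hj, h1, h2]; ring
  rw [isLittleO_iff_tendsto' (hne.mono fun ε h h0 => absurd h0 h)]
  have hsum : Tendsto
      (fun ε => (L ε (u ε) (p ε) - L ε (u 0) (p ε) - ℓ₁ ε * R₁) / ℓ₂ ε
        + (L ε (u 0) (p ε) - L 0 (u 0) (p ε) - ℓ₁ ε * P₁) / ℓ₂ ε - (R₂ + P₂))
      (𝓝[>] (0 : ℝ)) (𝓝 0) := by
    have := (hR₂.add hP₂).sub (tendsto_const_nhds (x := R₂ + P₂))
    simpa using this
  refine hsum.congr' ?_
  filter_upwards [hne, hkey] with ε h0 hk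
  rw [hk]
  field_simp
  ring
end

section
/- Averaged adjoint identity: Let L(ε,u,v) = J_ε(u) + a_ε(u,v) − f_ε(v) and let q_ε ∈ W solve the averaged adjoint equation ∫₀¹ ∂_u L(ε, s u_ε + (1−s)u₀, q_ε)(φ) ds = 0 for all φ ∈ V, where s ↦ ∂_u L(ε, s u_ε + (1−s)u₀, q)(φ) is continuously differentiable on [0,1] for all (φ,q). Then L(ε, u_ε, 0) = L(ε, u₀, q_ε) for all ε > 0; consequently, if ℓ₁(ε) → 0 and the limits R⁽¹⁾(u₀,q₀) := lim [L(ε,u₀,q_ε) − L(ε,u₀,q₀)]/ℓ₁(ε) and ∂_ℓ⁽¹⁾L(0,u₀,q₀) := lim [L(ε,u₀,q₀) − L(0,u₀,q₀)]/ℓ₁(ε) exist, then j(ε) = j(0) + ℓ₁(ε)(R⁽¹⁾(u₀,q₀) + ∂_ℓ⁽¹⁾L(0,u₀,q₀)) + o(ℓ₁(ε)). -/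
open Filter Asymptotics Topology

/-- Averaged adjoint identity and first order expansion: with
`L(ε,u,v) = J_ε(u) + a_ε(u,v) - f_ε(v)`,
`∂_u L(ε,u,q)(φ) = ∂J_ε(u)(φ) + a_ε(φ,q)`, and `q_ε ∈ W` solving the averaged
adjoint equation `∫₀¹ ∂_u L(ε, s u_ε + (1-s) u₀, q_ε)(φ) ds = 0` for all
`φ ∈ V`, one has `L(ε,u_ε,0) = L(ε,u₀,q_ε)` for all `ε > 0`; consequently, if
the limits `R⁽¹⁾(u₀,q₀)` and `∂_ℓ⁽¹⁾L(0,u₀,q₀)` exist then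
`j(ε) = j(0) + ℓ₁(ε)(R⁽¹⁾ + ∂_ℓ⁽¹⁾L) + o(ℓ₁(ε))`. -/
theorem stmt_16
    {V : Type*} [NormedAddCommGroup V] [InnerProductSpace ℝ V] [CompleteSpace V]
    (W : Submodule ℝ V)
    (a : ℝ → V →ₗ[ℝ] V →ₗ[ℝ] ℝ) (f : ℝ → V →ₗ[ℝ] ℝ)
    (J : ℝ → V → ℝ) (J' : ℝ → V → V →L[ℝ] ℝ)
    (u q : ℝ → V)
    (hstate : ∀ ε : ℝ, 0 ≤ ε → ∀ φ ∈ W, a ε (u ε) φ = f ε φ)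
    (hdiffW : ∀ ε : ℝ, 0 ≤ ε → u ε - u 0 ∈ W)
    (hJ : ∀ ε : ℝ, 0 ≤ ε → ∀ s ∈ Set.Icc (0 : ℝ) 1,
      HasFDerivAt (J ε) (J' ε (s • u ε + (1 - s) • u 0)) (s • u ε + (1 - s) • u 0))
    (hC1 : ∀ ε : ℝ, 0 ≤ ε → ∀ φ : V, ∀ w ∈ W,
      ContDiffOn ℝ 1 (fun s : ℝ => J' ε (s • u ε + (1 - s) • u 0) φ + a ε φ w)
        (Set.Icc (0 : ℝ) 1))
    (haadjW : ∀ ε : ℝ, 0 ≤ ε → q ε ∈ W)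
    (haadj : ∀ ε : ℝ, 0 ≤ ε → ∀ φ : V,
      (∫ s in (0 : ℝ)..1, (J' ε (s • u ε + (1 - s) • u 0) φ + a ε φ (q ε))) = 0)
    (L : ℝ → V → V → ℝ)
    (hL : ∀ ε u' v', L ε u' v' = J ε u' + a ε u' v' - f ε v')
    (j : ℝ → ℝ) (hj : ∀ ε : ℝ, j ε = J ε (u ε))
    (ℓ₁ : ℝ → ℝ) (hℓ₁pos : ∀ ε : ℝ, 0 < ε → 0 < ℓ₁ ε)
    (hℓ₁ : Tendsto ℓ₁ (𝓝[>] (0 : ℝ)) (𝓝 0))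
    (R₁ P₁ : ℝ)
    (hR₁ : Tendsto (fun ε => (L ε (u 0) (q ε) - L ε (u 0) (q 0)) / ℓ₁ ε)
      (𝓝[>] (0 : ℝ)) (𝓝 R₁))
    (hP₁ : Tendsto (fun ε => (L ε (u 0) (q 0) - L 0 (u 0) (q 0)) / ℓ₁ ε)
      (𝓝[>] (0 : ℝ)) (𝓝 P₁)) :
    (∀ ε : ℝ, 0 < ε → L ε (u ε) 0 = L ε (u 0) (q ε)) ∧
    (fun ε => j ε - j 0 - ℓ₁ ε * (R₁ + P₁)) =o[𝓝[>] (0 : ℝ)] ℓ₁ := by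
  -- Main identity, for any 0 ≤ ε
  have key : ∀ ε : ℝ, 0 ≤ ε → L ε (u ε) 0 = L ε (u 0) (q ε) := by
    intro ε hε
    set φ : V := u ε - u 0 with hφdef
    have hφW : φ ∈ W := hdiffW ε hε
    -- FTC for s ↦ J ε (s • u ε + (1-s) • u 0)
    have hpath : ∀ s : ℝ, HasDerivAt (fun t : ℝ => t • u ε + (1 - t) • u 0) φ s := by
      intro s
      have h1 : (fun t : ℝ => t • u ε + (1 - t) • u 0)
          = fun t : ℝ => t • (u ε - u 0) + u 0 := by
        funext t
        simp [smul_sub, sub_smul]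
        abel
      rw [h1]
      simpa using (((hasDerivAt_id s).smul_const (u ε - u 0)).add_const (u 0))
    have hderiv : ∀ s ∈ Set.uIcc (0 : ℝ) 1,
        HasDerivAt (fun t : ℝ => J ε (t • u ε + (1 - t) • u 0))
          (J' ε (s • u ε + (1 - s) • u 0) φ) s := by
      intro s hs
      rw [Set.uIcc_of_le (by norm_num : (0:ℝ) ≤ 1)] at hs
      exact (hJ ε hε s hs).comp_hasDerivAt s (hpath s)
    have hcont : ContinuousOn (fun s : ℝ => J' ε (s • u ε + (1 - s) • u 0) φ)
        (Set.Icc (0 : ℝ) 1) := by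
      have := (hC1 ε hε φ 0 (zero_mem W)).continuousOn
      simpa using this
    have hInt : IntervalIntegrable (fun s : ℝ => J' ε (s • u ε + (1 - s) • u 0) φ)
        MeasureTheory.volume 0 1 := by
      apply hcont.intervalIntegrable_of_Icc (by norm_num)
    have hFTC : (∫ s in (0:ℝ)..1, J' ε (s • u ε + (1 - s) • u 0) φ)
        = J ε (u ε) - J ε (u 0) := by
      have := intervalIntegral.integral_eq_sub_of_hasDerivAt hderiv hInt
      simpa using this
    -- split the averaged adjoint equation
    have hsplit : (∫ s in (0:ℝ)..1, (J' ε (s • u ε + (1 - s) • u 0) φ + a ε φ (q ε)))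
        = (J ε (u ε) - J ε (u 0)) + a ε φ (q ε) := by
      rw [intervalIntegral.integral_add hInt intervalIntegrable_const, hFTC]
      simp
    have hzero := haadj ε hε φ
    rw [hsplit] at hzero
    -- state equation with test function q ε
    have hst : a ε (u ε) (q ε) = f ε (q ε) := hstate ε hε (q ε) (haadjW ε hε)
    have haφ : a ε φ (q ε) = a ε (u ε) (q ε) - a ε (u 0) (q ε) := by
      rw [hφdef, map_sub]; rfl
    rw [hL, hL]
    simp only [map_zero]
    rw [haφ, hst] at hzero
    linarith
  refine ⟨fun ε hε => key ε hε.le, ?_⟩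
  -- expansion
  have hjL : ∀ ε : ℝ, 0 ≤ ε → j ε = L ε (u 0) (q ε) := by
    intro ε hε
    rw [hj, ← key ε hε, hL]
    simp
  have hj0 : j 0 = L 0 (u 0) (q 0) := hjL 0 le_rfl
  have hmem : ∀ᶠ ε in 𝓝[>] (0:ℝ), 0 < ε := self_mem_nhdsWithin
  have htend : Tendsto (fun ε => (j ε - j 0) / ℓ₁ ε) (𝓝[>] (0:ℝ)) (𝓝 (R₁ + P₁)) := by
    refine (hR₁.add hP₁).congr' ?_
    filter_upwards [hmem] with ε hε
    rw [← add_div]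
    congr 1
    rw [hjL ε hε.le, hj0]
    ring
  have hne0 : ∀ᶠ ε in 𝓝[>] (0:ℝ), ℓ₁ ε = 0 → j ε - j 0 - ℓ₁ ε * (R₁ + P₁) = 0 := by
    filter_upwards [hmem] with ε hε h0
    exact absurd h0 (hℓ₁pos ε hε).ne'
  rw [isLittleO_iff_tendsto' hne0]
  have : Tendsto (fun ε => (j ε - j 0) / ℓ₁ ε - (R₁ + P₁)) (𝓝[>] (0:ℝ)) (𝓝 0) := by
    simpa using htend.sub (tendsto_const_nhds (x := R₁ + P₁))
  refine this.congr' ?_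
  filter_upwards [hmem] with ε hε
  have hne : ℓ₁ ε ≠ 0 := (hℓ₁pos ε hε).ne'
  field_simp
end

section
/- Delfour decomposition identity: Let L(ε,u,v) = J_ε(u) + a_ε(u,v) − f_ε(v), let u_ε solve the perturbed state equation and p₀ ∈ W the unperturbed adjoint satisfying ∂_u L(0,u₀,p₀)(φ)=0 for all φ ∈ W. Then j(ε) − j(0) = [L(ε,u_ε,p₀) − L(ε,u₀,p₀) − ∂_u L(ε,u₀,p₀)(u_ε−u₀)] + [(∂_u L(ε,u₀,p₀) − ∂_u L(0,u₀,p₀))(u_ε−u₀)] + [L(ε,u₀,p₀) − L(0,u₀,p₀)]. Consequently, if each bracket divided by ℓ₁(ε) converges as ε ↘ 0 to R₁⁽¹⁾, R₂⁽¹⁾, ∂_ℓ⁽¹⁾L respectively, then j(ε) = j(0) + ℓ₁(ε)(R₁⁽¹⁾ + R₂⁽¹⁾ + ∂_ℓ⁽¹⁾L) + o(ℓ₁(ε)). -/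
open Filter Asymptotics Topology

/-- Delfour's decomposition identity and first order expansion: with
`L(ε,u,v) = J_ε(u) + a_ε(u,v) - f_ε(v)`, `u_ε` the perturbed state and
`p₀ ∈ W` the unperturbed adjoint (`∂_u L(0,u₀,p₀)(φ) = 0` for all `φ ∈ W`,
where `∂_u L(ε,u,v)(φ) = ∂J_ε(u)(φ) + a_ε(φ,v)`), one has
`j(ε) - j(0) = [L(ε,u_ε,p₀) - L(ε,u₀,p₀) - ∂_u L(ε,u₀,p₀)(u_ε-u₀)]
 + [(∂_u L(ε,u₀,p₀) - ∂_u L(0,u₀,p₀))(u_ε-u₀)] + [L(ε,u₀,p₀) - L(0,u₀,p₀)]`;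
consequently if each bracket divided by `ℓ₁(ε)` converges to `R₁⁽¹⁾, R₂⁽¹⁾,
∂_ℓ⁽¹⁾L` respectively, then
`j(ε) = j(0) + ℓ₁(ε)(R₁⁽¹⁾ + R₂⁽¹⁾ + ∂_ℓ⁽¹⁾L) + o(ℓ₁(ε))`. -/
theorem stmt_18
    {V : Type*} [NormedAddCommGroup V] [InnerProductSpace ℝ V] [CompleteSpace V]
    (W : Submodule ℝ V)
    (a : ℝ → V →ₗ[ℝ] V →ₗ[ℝ] ℝ) (f : ℝ → V →ₗ[ℝ] ℝ)
    (J : ℝ → V → ℝ) (J' : ℝ → V → V →L[ℝ] ℝ)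
    (u : ℝ → V) (p₀ : V)
    (hstate : ∀ ε : ℝ, 0 ≤ ε → ∀ φ ∈ W, a ε (u ε) φ = f ε φ)
    (hdiffW : ∀ ε : ℝ, 0 ≤ ε → u ε - u 0 ∈ W)
    (hJ : ∀ ε : ℝ, 0 ≤ ε → ∀ v : V, HasFDerivAt (J ε) (J' ε v) v)
    (hp₀W : p₀ ∈ W)
    (hadj : ∀ φ ∈ W, J' 0 (u 0) φ + a 0 φ p₀ = 0)
    (L : ℝ → V → V → ℝ)
    (hL : ∀ ε u' v', L ε u' v' = J ε u' + a ε u' v' - f ε v')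
    (j : ℝ → ℝ) (hj : ∀ ε : ℝ, j ε = J ε (u ε))
    (ℓ₁ : ℝ → ℝ) (hℓ₁pos : ∀ ε : ℝ, 0 < ε → 0 < ℓ₁ ε)
    (hℓ₁ : Tendsto ℓ₁ (𝓝[>] (0 : ℝ)) (𝓝 0))
    (R₁ R₂ P₁ : ℝ)
    (hR₁ : Tendsto (fun ε => (L ε (u ε) p₀ - L ε (u 0) p₀ -
        (J' ε (u 0) (u ε - u 0) + a ε (u ε - u 0) p₀)) / ℓ₁ ε)
      (𝓝[>] (0 : ℝ)) (𝓝 R₁))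
    (hR₂ : Tendsto (fun ε => ((J' ε (u 0) (u ε - u 0) + a ε (u ε - u 0) p₀) -
        (J' 0 (u 0) (u ε - u 0) + a 0 (u ε - u 0) p₀)) / ℓ₁ ε)
      (𝓝[>] (0 : ℝ)) (𝓝 R₂))
    (hP₁ : Tendsto (fun ε => (L ε (u 0) p₀ - L 0 (u 0) p₀) / ℓ₁ ε)
      (𝓝[>] (0 : ℝ)) (𝓝 P₁)) :
    (∀ ε : ℝ, 0 < ε →
      j ε - j 0 =
        (L ε (u ε) p₀ - L ε (u 0) p₀ -
          (J' ε (u 0) (u ε - u 0) + a ε (u ε - u 0) p₀)) +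
        ((J' ε (u 0) (u ε - u 0) + a ε (u ε - u 0) p₀) -
          (J' 0 (u 0) (u ε - u 0) + a 0 (u ε - u 0) p₀)) +
        (L ε (u 0) p₀ - L 0 (u 0) p₀)) ∧
    (fun ε => j ε - j 0 - ℓ₁ ε * (R₁ + R₂ + P₁)) =o[𝓝[>] (0 : ℝ)] ℓ₁ := by
  have hid : ∀ ε : ℝ, 0 < ε →
      j ε - j 0 =
        (L ε (u ε) p₀ - L ε (u 0) p₀ -
          (J' ε (u 0) (u ε - u 0) + a ε (u ε - u 0) p₀)) +
        ((J' ε (u 0) (u ε - u 0) + a ε (u ε - u 0) p₀) -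
          (J' 0 (u 0) (u ε - u 0) + a 0 (u ε - u 0) p₀)) +
        (L ε (u 0) p₀ - L 0 (u 0) p₀) := by
    intro ε hε
    have h1 := hstate ε hε.le p₀ hp₀W
    have h2 := hstate 0 le_rfl p₀ hp₀W
    have h3 := hadj (u ε - u 0) (hdiffW ε hε.le)
    rw [hj, hj, hL, hL, hL]
    linarith
  refine ⟨hid, ?_⟩
  have hev : ∀ᶠ ε in 𝓝[>] (0 : ℝ), 0 < ε := self_mem_nhdsWithin
  have hne : ∀ᶠ ε in 𝓝[>] (0 : ℝ), ℓ₁ ε ≠ 0 :=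
    hev.mono fun ε hε => (hℓ₁pos ε hε).ne'
  have hsum : Tendsto (fun ε => (j ε - j 0) / ℓ₁ ε) (𝓝[>] (0 : ℝ))
      (𝓝 (R₁ + R₂ + P₁)) := by
    refine Tendsto.congr' ?_ ((hR₁.add hR₂).add hP₁)
    filter_upwards [hev] with ε hε
    rw [hid ε hε]
    ring
  rw [isLittleO_iff_tendsto' (hne.mono fun ε h h' => absurd h' h)]
  have : Tendsto (fun ε => (j ε - j 0) / ℓ₁ ε - (R₁ + R₂ + P₁))
      (𝓝[>] (0 : ℝ)) (𝓝 0) := by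
    simpa using hsum.sub (tendsto_const_nhds : Tendsto (fun _ : ℝ => R₁ + R₂ + P₁) (𝓝[>] (0:ℝ)) _)
  refine this.congr' ?_
  filter_upwards [hne] with ε hε
  field_simp
end
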